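/- For every positive integer k and every nonnegative integer n, M_{n,k}(t) = \sum_{j=0}^{\lfloor (n-k)/2 \rfloor} \left( \binom{k+2j}{j} - \binom{k+2j}{j-1} \right) \binom{n}{2j+k} t^{n-2j-k}. -/

import Mathlib

/-!
Split a Motzkin path according to its level steps. Placing the `n - m` level steps gives the factor
`C(n, m) t^(n-m)`, and the remaining up and down steps form a Dyck prefix of length `m = k + 2j`
ending at height `k`; by the reflection principle there are `C(k+2j, j) - C(k+2j, j-1)` of them.
Formally, the sum of these terms satisfies the recurrence of `M_{n,k}`, term by term: Pascal's rule
for `C(n, m)` combined with the Dyck recurrence for the ballot numbers.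
-/

open Polynomial

/-- The weight polynomials `M_{n,k}(t)` of Motzkin paths from `(0,0)` to `(n,k)`. -/
noncomputable def motzkinPoly : ℕ → ℤ → Polynomial ℤ
  | 0, k => if k = 0 then 1 else 0
  | n + 1, k =>
      if k < 0 then 0 else
        motzkinPoly n (k - 1) + X * motzkinPoly n k + motzkinPoly n (k + 1)
  termination_by n _ => n

/-- The number of Dyck prefixes of length `k + 2j` ending at height `k`. -/
def ballot (k j : ℕ) : ℤ :=
  ((k + 2 * j).choose j : ℤ) - (if j = 0 then 0 else ((k + 2 * j).choose (j - 1) : ℤ))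

/-- Reflecting `C(k+2j, j-1)` to `C(k+2j, k+j+1)` removes the special case `j = 0` and makes
both recurrences below instances of Pascal's rule. -/
lemma ballot_eq_choose_sub_choose (k j : ℕ) :
    ballot k j = ((k + 2 * j).choose j : ℤ) - ((k + 2 * j).choose (k + j + 1) : ℤ) := by
  rcases j with _ | j
  · simp [ballot]
  · rw [ballot, if_neg j.succ_ne_zero, Nat.add_sub_cancel,
      Nat.choose_symm_of_eq_add (show k + 2 * (j + 1) = j + (k + (j + 1) + 1) by ring)]

@[simp]
lemma ballot_zero_right (k : ℕ) : ballot k 0 = 1 := by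
  simp [ballot]

lemma ballot_succ_succ (k j : ℕ) :
    ballot (k + 1) (j + 1) = ballot k (j + 1) + ballot (k + 2) j := by
  simp only [ballot_eq_choose_sub_choose,
    show k + 1 + 2 * (j + 1) = (k + 2 * j + 2) + 1 by ring,
    show k + 1 + (j + 1) + 1 = (k + j + 2) + 1 by ring,
    show k + 2 * (j + 1) = k + 2 * j + 2 by ring, show k + 2 + 2 * j = k + 2 * j + 2 by ring,
    show k + 2 + j + 1 = k + j + 2 + 1 by ring, show k + (j + 1) + 1 = k + j + 2 by ring,
    Nat.choose_succ_succ', Nat.cast_add]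
  ring

lemma ballot_zero_succ (j : ℕ) : ballot 0 (j + 1) = ballot 1 j := by
  simp only [ballot_eq_choose_sub_choose,
    show 0 + 2 * (j + 1) = (2 * j + 1) + 1 by ring, show 0 + (j + 1) + 1 = (j + 1) + 1 by ring,
    show 1 + 2 * j = 2 * j + 1 by ring, show 1 + j + 1 = j + 1 + 1 by ring,
    Nat.choose_succ_succ', Nat.cast_add]
  ring

lemma C_choose_mul_X_pow_succ_succ (n m : ℕ) :
    C ((n + 1).choose (m + 1) : ℤ) * X ^ (n + 1 - (m + 1)) =
      C (n.choose m : ℤ) * X ^ (n - m) +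
        X * (C (n.choose (m + 1) : ℤ) * X ^ (n - (m + 1))) := by
  rw [Nat.choose_succ_succ', Nat.add_sub_add_right, Nat.cast_add, C_add, add_mul]
  congr 1
  rcases lt_or_ge m n with hmn | hnm
  · rw [mul_left_comm, ← pow_succ', show n - (m + 1) + 1 = n - m by omega]
  · simp [Nat.choose_eq_zero_of_lt (show n < m + 1 by omega)]

noncomputable def motzkinTerm (n k j : ℕ) : ℤ[X] :=
  C (ballot k j * (n.choose (2 * j + k) : ℤ)) * X ^ (n - 2 * j - k)

lemma motzkinTerm_eq (n k j : ℕ) :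
    motzkinTerm n k j =
      C (ballot k j) * (C (n.choose (2 * j + k) : ℤ) * X ^ (n - (2 * j + k))) := by
  rw [motzkinTerm, C_mul, mul_assoc, Nat.sub_sub]

lemma motzkinTerm_eq_zero_of_lt {n k j : ℕ} (h : n < 2 * j + k) : motzkinTerm n k j = 0 := by
  simp [motzkinTerm, Nat.choose_eq_zero_of_lt h]

lemma motzkinTerm_succ_succ_zero (n k : ℕ) :
    motzkinTerm (n + 1) (k + 1) 0 = motzkinTerm n k 0 + X * motzkinTerm n (k + 1) 0 := by
  simp only [motzkinTerm_eq, ballot_zero_right, C_1, one_mul, Nat.mul_zero, Nat.zero_add]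
  exact C_choose_mul_X_pow_succ_succ n k

lemma motzkinTerm_succ_succ_succ (n k j : ℕ) :
    motzkinTerm (n + 1) (k + 1) (j + 1) =
      motzkinTerm n k (j + 1) + X * motzkinTerm n (k + 1) (j + 1) + motzkinTerm n (k + 2) j := by
  have hm : 2 * (j + 1) + (k + 1) = (2 * j + k + 2) + 1 := by ring
  simp only [motzkinTerm_eq, hm, C_choose_mul_X_pow_succ_succ, ballot_succ_succ,
    show 2 * (j + 1) + k = 2 * j + k + 2 by ring, show 2 * j + (k + 2) = 2 * j + k + 2 by ring,
    C_add]
  ring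

lemma motzkinTerm_succ_zero_zero (n : ℕ) : motzkinTerm (n + 1) 0 0 = X * motzkinTerm n 0 0 := by
  simp [motzkinTerm, pow_succ']

lemma motzkinTerm_succ_zero_succ (n j : ℕ) :
    motzkinTerm (n + 1) 0 (j + 1) = X * motzkinTerm n 0 (j + 1) + motzkinTerm n 1 j := by
  have hm : 2 * (j + 1) + 0 = (2 * j + 1) + 1 := by ring
  simp only [motzkinTerm_eq, hm, C_choose_mul_X_pow_succ_succ, ballot_zero_succ]
  ring

lemma motzkinPoly_of_neg (n : ℕ) {k : ℤ} (hk : k < 0) : motzkinPoly n k = 0 := by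
  cases n with
  | zero => rw [motzkinPoly, if_neg hk.ne]
  | succ n => rw [motzkinPoly, if_pos hk]

lemma motzkinPoly_succ_zero (n : ℕ) :
    motzkinPoly (n + 1) 0 = X * motzkinPoly n 0 + motzkinPoly n 1 := by
  rw [motzkinPoly, if_neg (lt_irrefl 0), motzkinPoly_of_neg n (by norm_num), zero_add, zero_add]

lemma motzkinPoly_succ_natCast_succ (n k : ℕ) :
    motzkinPoly (n + 1) (k + 1 : ℕ) =
      motzkinPoly n k + X * motzkinPoly n (k + 1 : ℕ) + motzkinPoly n (k + 2 : ℕ) := by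
  rw [motzkinPoly, if_neg (Int.natCast_nonneg _).not_gt]
  push_cast
  rw [add_sub_cancel_right, add_assoc (k : ℤ) 1 1, one_add_one_eq_two]

/-- The vanishing of `motzkinTerm n k (n + 1)` lets the index `0` be split off without
changing the range. -/
lemma sum_range_motzkinTerm_eq_add_sum_succ (n k : ℕ) :
    ∑ j ∈ Finset.range (n + 1), motzkinTerm n k j =
      motzkinTerm n k 0 + ∑ j ∈ Finset.range (n + 1), motzkinTerm n k (j + 1) := by
  rw [← Finset.eventually_constant_sum (N := n + 1) (n := n + 2)
      (fun _ hj => motzkinTerm_eq_zero_of_lt (by omega)) (by omega),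
    Finset.sum_range_succ', add_comm]

theorem motzkinPoly_eq_sum_motzkinTerm (n k : ℕ) :
    motzkinPoly n k = ∑ j ∈ Finset.range (n + 1), motzkinTerm n k j := by
  induction n generalizing k with
  | zero => cases k <;> simp [motzkinPoly, motzkinTerm, Nat.cast_add_one_ne_zero]
  | succ n ih =>
    rw [Finset.sum_range_succ']
    rcases k with _ | k
    · rw [Nat.cast_zero, motzkinPoly_succ_zero, ← Nat.cast_zero, ← Nat.cast_one, ih, ih,
        sum_range_motzkinTerm_eq_add_sum_succ n 0]
      simp only [motzkinTerm_succ_zero_succ, motzkinTerm_succ_zero_zero, Finset.sum_add_distrib,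
        ← Finset.mul_sum]
      ring
    · rw [motzkinPoly_succ_natCast_succ, ih, ih, ih, sum_range_motzkinTerm_eq_add_sum_succ n k,
        sum_range_motzkinTerm_eq_add_sum_succ n (k + 1)]
      simp only [motzkinTerm_succ_succ_succ, motzkinTerm_succ_succ_zero, Finset.sum_add_distrib,
        ← Finset.mul_sum]
      ring

theorem motzkinPoly_closed_form_pos_general (k : ℕ) (n : ℕ) :
    motzkinPoly n (k : ℤ) =
      ∑ j ∈ Finset.range ((n - k) / 2 + 1),
        C ((((k + 2 * j).choose j : ℤ) -
              (if j = 0 then 0 else ((k + 2 * j).choose (j - 1) : ℤ))) *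
            (n.choose (2 * j + k) : ℤ)) * X ^ (n - 2 * j - k) := by
  rw [motzkinPoly_eq_sum_motzkinTerm,
    Finset.eventually_constant_sum (N := (n - k) / 2 + 1)
      (fun _ hj => motzkinTerm_eq_zero_of_lt (by omega)) (by omega)]
  rfl

/-- For positive `k`:
`M_{n,k}(t) = ∑_j (C(k+2j, j) - C(k+2j, j-1)) · C(n, 2j+k) · t^{n-2j-k}`,
with the convention `C(k, -1) = 0` for the `j = 0` term. -/
theorem motzkinPoly_closed_form_pos (k : ℕ) (hk : 0 < k) (n : ℕ) :
    motzkinPoly n (k : ℤ) =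
      ∑ j ∈ Finset.range ((n - k) / 2 + 1),
        C ((((k + 2 * j).choose j : ℤ) -
              (if j = 0 then 0 else ((k + 2 * j).choose (j - 1) : ℤ))) *
            (n.choose (2 * j + k) : ℤ)) * X ^ (n - 2 * j - k) :=
  motzkinPoly_closed_form_pos_general k n
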